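/- Suppose scarf(I) < ∞. Then every subset S ⊆ [q] with |S| ≥ 2 that has a gap satisfies |S| ≥ scarf(I); consequently, for every pivot resolution T_S of Q/I and every index i, the rank of (T_S)_i is at least binom(q,i) − binom(q−scarf(I), i−scarf(I)). -/

import Mathlib

open MvPolynomial Finset

noncomputable section

/-- `fsign A B` is `0` if `A ∩ B ≠ ∅`, and otherwise `(−1)^{p(A,B)}` where `p(A,B)`
is the number of pairs `(a,b) ∈ A × B` with `a > b`. -/
def fsign {α : Type*} [LinearOrder α] [DecidableEq α] (A B : Finset α) : ℤ :=
  if A ∩ B = ∅ then (-1 : ℤ) ^ (((A ×ˢ B).filter fun p => p.2 < p.1).card) else 0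

/-- The total module underlying the Taylor complex: free over `Q = k[x_1,…,x_n]`
with basis `ε_τ` indexed by all subsets `τ ⊆ [q]`. -/
abbrev TotMod (k : Type*) [Field k] (n q : ℕ) : Type _ :=
  Finset (Fin q) →₀ MvPolynomial (Fin n) k

/-- `m_τ = lcm{m_i : i ∈ τ}`, where `m_i` is the monomial with exponent vector `D i`. -/
def lcmMono (k : Type*) [Field k] (n q : ℕ) (D : Fin q → (Fin n →₀ ℕ))
    (τ : Finset (Fin q)) : MvPolynomial (Fin n) k :=
  monomial (τ.sup D) (1 : k)

/-- The monomial ideal `I = (m_1, …, m_q)`. -/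
def monIdeal (k : Type*) [Field k] (n q : ℕ) (D : Fin q → (Fin n →₀ ℕ)) :
    Ideal (MvPolynomial (Fin n) k) :=
  Ideal.span (Set.range fun i => monomial (D i) (1 : k))

/-- The Taylor differential `∂(ε_τ) = Σ_{j∈τ} sign(j, τ∖{j}) (m_τ/m_{τ∖{j}}) ε_{τ∖{j}}`,
as a linear endomorphism of the total module. -/
def taylorD (k : Type*) [Field k] (n q : ℕ) (D : Fin q → (Fin n →₀ ℕ)) :
    TotMod k n q →ₗ[MvPolynomial (Fin n) k] TotMod k n q :=
  Finsupp.linearCombination _ fun τ =>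
    ∑ j ∈ τ, Finsupp.single (τ \ {j})
      ((fsign {j} (τ \ {j}) : MvPolynomial (Fin n) k) *
        monomial (τ.sup D - (τ \ {j}).sup D) (1 : k))

/-- The degree-`i` piece of the subcomplex of the Taylor complex spanned by the
`ε_τ` with `τ ∈ Ω`: the free submodule with basis `{ε_τ : τ ∈ Ω, |τ| = i}`. -/
def piece (k : Type*) [Field k] (n q : ℕ) (Ω : Set (Finset (Fin q))) (i : ℕ) :
    Submodule (MvPolynomial (Fin n) k) (TotMod k n q) :=
  Finsupp.supported _ _ {τ | τ ∈ Ω ∧ τ.card = i}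

/-- The subcomplex of the Taylor complex spanned by all `ε_τ` with `τ ∈ Ω`. -/
def subcx (k : Type*) [Field k] (n q : ℕ) (Ω : Set (Finset (Fin q))) :
    Submodule (MvPolynomial (Fin n) k) (TotMod k n q) :=
  Finsupp.supported _ _ Ω

/-- The index family of the pivot complex `T_S`: all `τ` with `τ ⊉ S`. -/
def pivotΩ {q : ℕ} (S : Finset (Fin q)) : Set (Finset (Fin q)) := {τ | ¬ S ⊆ τ}

/-- The subcomplex of the Taylor complex spanned by `{ε_τ : τ ∈ Ω}` is a resolution
of `Q/I`: it is exact in homological degrees `≥ 1`, and its zeroth homology is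
identified with `Q/I` via the augmentation `ε_∅ ↦ 1`. -/
def IsResolutionOf (k : Type*) [Field k] (n q : ℕ) (D : Fin q → (Fin n →₀ ℕ))
    (Ω : Set (Finset (Fin q))) : Prop :=
  (∀ i : ℕ, ∀ x ∈ piece k n q Ω (i + 1), taylorD k n q D x = 0 →
      ∃ y ∈ piece k n q Ω (i + 2), taylorD k n q D y = x) ∧
  (∀ x ∈ piece k n q Ω 0,
      (x (∅ : Finset (Fin q)) ∈ monIdeal k n q D ↔
        ∃ y ∈ piece k n q Ω 1, taylorD k n q D y = x))

/-- The Scarf set of `I`: all `t` such that there are two distinct subsets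
`τ ≠ τ'` of `[q]` with `|τ| = t` and `m_τ = m_{τ'}`.  The Scarf number of `I`
is `sInf` of this set; `scarf(I) = ∞` corresponds to this set being empty. -/
def scarfSet (k : Type*) [Field k] (n q : ℕ) (D : Fin q → (Fin n →₀ ℕ)) : Set ℕ :=
  {t | ∃ τ τ' : Finset (Fin q), τ ≠ τ' ∧ τ.card = t ∧
        lcmMono k n q D τ = lcmMono k n q D τ'}

end


noncomputable section AuxProofs

open Finset MvPolynomial

private lemma fsign_singleton {α : Type*} [LinearOrder α] [DecidableEq α] (j : α) (A : Finset α)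
    (hj : j ∉ A) : fsign {j} A = (-1 : ℤ) ^ (A.filter (· < j)).card := by
  rw [fsign, if_pos (Finset.singleton_inter_of_notMem hj)]
  congr 1
  rw [Finset.singleton_product, Finset.filter_map, Finset.card_map]
  rfl

private lemma filter_lt_erase {α : Type*} [LinearOrder α] [DecidableEq α] (τ : Finset α)
    (a b : α) (hab : ¬ a < b) : (τ.erase a).filter (· < b) = τ.filter (· < b) := by
  rw [Finset.filter_erase, Finset.erase_eq_of_notMem]
  simp [hab]

private lemma sign_aux_lt {α : Type*} [LinearOrder α] [DecidableEq α] {τ : Finset α} {j j' : α}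
    (hj : j ∈ τ) (hlt : j < j') :
    fsign {j} (τ.erase j) * fsign {j'} ((τ.erase j).erase j')
      = - (fsign {j'} (τ.erase j') * fsign {j} ((τ.erase j').erase j)) := by
  have h1 : j ∉ τ.erase j := Finset.notMem_erase _ _
  have h2 : j' ∉ (τ.erase j).erase j' := Finset.notMem_erase _ _
  have h3 : j' ∉ τ.erase j' := Finset.notMem_erase _ _
  have h4 : j ∉ (τ.erase j').erase j := Finset.notMem_erase _ _
  rw [fsign_singleton _ _ h1, fsign_singleton _ _ h2, fsign_singleton _ _ h3,
    fsign_singleton _ _ h4]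
  rw [filter_lt_erase τ j j (lt_irrefl j)]
  rw [show ((τ.erase j).erase j').filter (· < j') = (τ.filter (· < j')).erase j by
    rw [filter_lt_erase _ j' j' (lt_irrefl j'), Finset.filter_erase]]
  rw [filter_lt_erase τ j' j' (lt_irrefl j')]
  rw [show ((τ.erase j').erase j).filter (· < j) = τ.filter (· < j) by
    rw [filter_lt_erase _ j j (lt_irrefl j), filter_lt_erase _ j' j (not_lt_of_gt hlt)]]
  have hjmem : j ∈ τ.filter (· < j') := Finset.mem_filter.2 ⟨hj, hlt⟩
  have hc : ((τ.filter (· < j')).erase j).card + 1 = (τ.filter (· < j')).card :=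
    Finset.card_erase_add_one hjmem
  rw [← pow_add, ← pow_add, ← hc]
  ring

private lemma sign_aux {α : Type*} [LinearOrder α] [DecidableEq α] {τ : Finset α} {j j' : α}
    (hj : j ∈ τ) (hj' : j' ∈ τ) (hne : j ≠ j') :
    fsign {j} (τ.erase j) * fsign {j'} ((τ.erase j).erase j')
      = - (fsign {j'} (τ.erase j') * fsign {j} ((τ.erase j').erase j)) := by
  rcases lt_or_gt_of_ne hne with h | h
  · exact sign_aux_lt hj h
  · rw [sign_aux_lt hj' h, neg_neg]

private lemma taylorD_single (k : Type*) [Field k] (n q : ℕ) (D : Fin q → (Fin n →₀ ℕ))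
    (τ : Finset (Fin q)) (c : MvPolynomial (Fin n) k) :
    taylorD k n q D (Finsupp.single τ c) =
      ∑ j ∈ τ, Finsupp.single (τ.erase j)
        (c * ((fsign {j} (τ.erase j) : MvPolynomial (Fin n) k) *
          monomial (τ.sup D - (τ.erase j).sup D) (1 : k))) := by
  rw [taylorD, Finsupp.linearCombination_single, Finset.smul_sum]
  simp only [Finset.sdiff_singleton_eq_erase, Finsupp.smul_single, smul_eq_mul]

private lemma taylorD_sq (k : Type*) [Field k] (n q : ℕ) (D : Fin q → (Fin n →₀ ℕ))
    (τ : Finset (Fin q)) :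
    taylorD k n q D (taylorD k n q D (Finsupp.single τ (1 : MvPolynomial (Fin n) k))) = 0 := by
  rw [taylorD_single, map_sum]
  simp only [taylorD_single]
  rw [Finset.sum_sigma' τ (fun j => τ.erase j)]
  refine Finset.sum_involution (fun p _ => ⟨p.2, p.1⟩) ?_ ?_ ?_ ?_
  · rintro ⟨j, j'⟩ hp
    rw [Finset.mem_sigma] at hp
    have hj : j ∈ τ := hp.1
    have hj'e : j' ∈ τ.erase j := hp.2
    have hne : j' ≠ j := (Finset.mem_erase.1 hj'e).1
    have hj' : j' ∈ τ := Finset.mem_of_mem_erase hj'e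
    dsimp only
    rw [Finset.erase_right_comm (a := j') (b := j)]
    rw [← Finsupp.single_add]
    refine (congrArg (Finsupp.single _) ?_).trans (Finsupp.single_zero _)
    have hset : (τ.erase j).erase j' = (τ.erase j').erase j := Finset.erase_right_comm
    have h1 : (τ.erase j).sup D ≤ τ.sup D := Finset.sup_mono (Finset.erase_subset _ _)
    have h2 : ((τ.erase j).erase j').sup D ≤ (τ.erase j).sup D :=
      Finset.sup_mono (Finset.erase_subset _ _)
    have h1' : (τ.erase j').sup D ≤ τ.sup D := Finset.sup_mono (Finset.erase_subset _ _)
    have h2' : ((τ.erase j).erase j').sup D ≤ (τ.erase j').sup D := by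
      rw [hset]; exact Finset.sup_mono (Finset.erase_subset _ _)
    have e1 : (monomial (τ.sup D - (τ.erase j).sup D) (1:k)) *
        (monomial ((τ.erase j).sup D - ((τ.erase j).erase j').sup D) (1:k)) =
        monomial (τ.sup D - ((τ.erase j).erase j').sup D) (1:k) := by
      rw [monomial_mul, mul_one, tsub_add_tsub_cancel h1 h2]
    have e2 : (monomial (τ.sup D - (τ.erase j').sup D) (1:k)) *
        (monomial ((τ.erase j').sup D - ((τ.erase j).erase j').sup D) (1:k)) =
        monomial (τ.sup D - ((τ.erase j).erase j').sup D) (1:k) := by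
      rw [monomial_mul, mul_one, tsub_add_tsub_cancel h1' h2']
    have key : (fsign {j} (τ.erase j) * fsign {j'} ((τ.erase j).erase j') : ℤ)
        = -(fsign {j'} (τ.erase j') * fsign {j} ((τ.erase j).erase j')) := by
      have h := sign_aux hj hj' hne.symm
      rwa [← hset] at h
    calc 1 * ((fsign {j} (τ.erase j) : MvPolynomial (Fin n) k) *
            monomial (τ.sup D - (τ.erase j).sup D) (1:k)) *
          ((fsign {j'} ((τ.erase j).erase j') : MvPolynomial (Fin n) k) *
            monomial ((τ.erase j).sup D - ((τ.erase j).erase j').sup D) (1:k)) +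
        1 * ((fsign {j'} (τ.erase j') : MvPolynomial (Fin n) k) *
            monomial (τ.sup D - (τ.erase j').sup D) (1:k)) *
          ((fsign {j} ((τ.erase j).erase j') : MvPolynomial (Fin n) k) *
            monomial ((τ.erase j').sup D - ((τ.erase j).erase j').sup D) (1:k))
        = ((fsign {j} (τ.erase j) * fsign {j'} ((τ.erase j).erase j') : ℤ) :
              MvPolynomial (Fin n) k) *
            (monomial (τ.sup D - (τ.erase j).sup D) (1:k) *
              monomial ((τ.erase j).sup D - ((τ.erase j).erase j').sup D) (1:k)) +
          ((fsign {j'} (τ.erase j') * fsign {j} ((τ.erase j).erase j') : ℤ) :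
              MvPolynomial (Fin n) k) *
            (monomial (τ.sup D - (τ.erase j').sup D) (1:k) *
              monomial ((τ.erase j').sup D - ((τ.erase j).erase j').sup D) (1:k)) := by
          push_cast; ring
      _ = 0 := by rw [e1, e2, key]; push_cast; ring
  · rintro ⟨j, j'⟩ hp _
    rw [Finset.mem_sigma] at hp
    intro h
    have : j' = j := congrArg Sigma.fst h
    exact (Finset.mem_erase.1 hp.2).1 this
  · rintro ⟨j, j'⟩ hp
    rw [Finset.mem_sigma] at hp ⊢
    exact ⟨Finset.mem_of_mem_erase hp.2,
      Finset.mem_erase.2 ⟨fun h => (Finset.mem_erase.1 hp.2).1 h.symm, hp.1⟩⟩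
  · rintro ⟨j, j'⟩ _
    rfl

set_option maxHeartbeats 1000000 in
private lemma resolution_gap (k : Type*) [Field k] (n q : ℕ) (D : Fin q → (Fin n →₀ ℕ))
    (S : Finset (Fin q)) (hS : 2 ≤ S.card)
    (hres : IsResolutionOf k n q D (pivotΩ S)) :
    ∃ h : Fin q, h ∉ S ∧ D h ≤ S.sup D := by
  by_contra hgap
  push_neg at hgap
  obtain ⟨j₀, hj₀⟩ : S.Nonempty := Finset.card_pos.1 (by omega)
  set e := S.erase j₀ with he_def
  have hj₀e : j₀ ∉ e := Finset.notMem_erase _ _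
  have hesub : e.sup D ≤ S.sup D := Finset.sup_mono (Finset.erase_subset _ _)
  set u := S.sup D - e.sup D with hu_def
  set x := taylorD k n q D (Finsupp.single S (1 : MvPolynomial (Fin n) k)) with hx
  have hxmem : x ∈ piece k n q (pivotΩ S) (S.card - 1) := by
    rw [hx, taylorD_single]
    apply Submodule.sum_mem
    intro j hj
    apply Finsupp.single_mem_supported
    constructor
    · exact fun hsub => Finset.notMem_erase j S (hsub hj)
    · exact Finset.card_erase_of_mem hj
  have h21 : S.card - 2 + 1 = S.card - 1 := by omega
  have h22 : S.card - 2 + 2 = S.card := by omega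
  obtain ⟨y, hymem, hyx⟩ := hres.1 (S.card - 2) x (by rw [h21]; exact hxmem)
    (taylorD_sq k n q D S)
  rw [h22] at hymem
  have hcx : coeff u (x e) = ((fsign {j₀} e : ℤ) : k) := by
    rw [hx, taylorD_single, Finsupp.finset_sum_apply]
    rw [Finset.sum_eq_single j₀]
    · rw [Finsupp.single_eq_same, one_mul, ← map_intCast (C : k →+* MvPolynomial (Fin n) k),
        coeff_C_mul, ← hu_def, coeff_monomial, if_pos rfl, mul_one]
    · intro j hj hne
      apply Finsupp.single_eq_of_ne
      intro hEq
      have : j₀ ∈ S.erase j := Finset.mem_erase.2 ⟨(Ne.symm hne : j₀ ≠ j), hj₀⟩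
      rw [← hEq] at this
      exact hj₀e this
    · intro h; exact absurd hj₀ h
  have hne0 : ((fsign {j₀} e : ℤ) : k) ≠ 0 := by
    rw [fsign_singleton _ _ hj₀e]
    push_cast
    exact pow_ne_zero _ (neg_ne_zero.2 one_ne_zero)
  have hyΩ : ∀ τ ∈ y.support, ¬ S ⊆ τ := by
    intro τ hτ
    have := (Finsupp.mem_supported _ _).1 hymem hτ
    exact this.1
  have hcy : coeff u ((taylorD k n q D y) e) = 0 := by
    rw [taylorD, Finsupp.linearCombination_apply, Finsupp.sum, Finsupp.finset_sum_apply,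
      coeff_sum]
    apply Finset.sum_eq_zero
    intro τ hτ
    simp only [Finset.sdiff_singleton_eq_erase, Finsupp.smul_apply, Finsupp.finset_sum_apply,
      Finset.smul_sum, coeff_sum]
    apply Finset.sum_eq_zero
    intro j hj
    rw [smul_eq_mul, Finsupp.single_apply, mul_ite, mul_zero]
    by_cases hEq : τ.erase j = e
    · rw [if_pos hEq, hEq, ← mul_assoc, coeff_mul_monomial']
      rw [if_neg]
      intro hle
      have hτS : τ.sup D ≤ S.sup D := by
        have h1 : τ.sup D ≤ u + e.sup D := tsub_le_iff_right.1 hle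
        rwa [hu_def, tsub_add_cancel_of_le hesub] at h1
      have hjS : D j ≤ S.sup D := le_trans (Finset.le_sup hj) hτS
      have hjnotinS : j ∉ S := by
        intro hjmem
        by_cases hjj : j = j₀
        · subst hjj
          have : τ = S := by
            rw [← Finset.insert_erase hj, hEq, he_def, Finset.insert_erase hj₀]
          exact hyΩ τ hτ (this ▸ Finset.Subset.refl S)
        · have : j ∈ e := Finset.mem_erase.2 ⟨hjj, hjmem⟩
          rw [← hEq] at this
          exact Finset.notMem_erase _ _ this
      exact hgap j hjnotinS hjS
    · rw [if_neg hEq, coeff_zero]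
  rw [hyx, hcx] at hcy
  exact hne0 hcy

set_option maxHeartbeats 1600000 in
private lemma finrank_piece (k : Type*) [Field k] (n q : ℕ) (S : Finset (Fin q)) (i : ℕ) :
    Module.finrank (MvPolynomial (Fin n) k) (piece k n q (pivotΩ S) i)
      = (Finset.univ.filter (fun τ : Finset (Fin q) => ¬ S ⊆ τ ∧ τ.card = i)).card := by
  letI : Fintype ↑{τ : Finset (Fin q) | τ ∈ pivotΩ S ∧ τ.card = i} :=
    Fintype.ofFinset (Finset.univ.filter (fun τ => ¬ S ⊆ τ ∧ τ.card = i))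
      (by intro τ; simp only [Finset.mem_filter, Finset.mem_univ, true_and]; exact Iff.rfl)
  rw [piece, (Finsupp.supportedEquivFinsupp _).finrank_eq, Module.finrank_finsupp_self,
    Fintype.card_ofFinset]

private lemma count_bound (q : ℕ) (S : Finset (Fin q)) (s i : ℕ) (hs : s ≤ S.card) :
    q.choose i ≤ (Finset.univ.filter (fun τ : Finset (Fin q) => ¬ S ⊆ τ ∧ τ.card = i)).card
      + (if s ≤ i then (q - s).choose (i - s) else 0) := by
  classical
  have htotal : (Finset.univ.filter (fun τ : Finset (Fin q) => τ.card = i)).card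
      = q.choose i := by
    rw [← Finset.powerset_univ, ← Finset.powersetCard_eq_filter, Finset.card_powersetCard,
      Finset.card_univ, Fintype.card_fin]
  have hsplit := Finset.card_filter_add_card_filter_not
    (s := Finset.univ.filter (fun τ : Finset (Fin q) => τ.card = i)) (fun τ => S ⊆ τ)
  rw [Finset.filter_filter, Finset.filter_filter, htotal] at hsplit
  have heq : (Finset.univ.filter (fun τ : Finset (Fin q) => τ.card = i ∧ ¬ S ⊆ τ)).card
      = (Finset.univ.filter (fun τ : Finset (Fin q) => ¬ S ⊆ τ ∧ τ.card = i)).card := by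
    congr 1
    apply Finset.filter_congr
    intro τ _
    exact and_comm
  have hbound : (Finset.univ.filter (fun τ : Finset (Fin q) => τ.card = i ∧ S ⊆ τ)).card
      ≤ (if s ≤ i then (q - s).choose (i - s) else 0) := by
    by_cases hsi : s ≤ i
    · rw [if_pos hsi]
      obtain ⟨S₀, hS₀sub, hS₀card⟩ := Finset.exists_subset_card_eq hs
      have hinj : (Finset.univ.filter (fun τ : Finset (Fin q) => τ.card = i ∧ S ⊆ τ)).card
          ≤ (Finset.powersetCard (i - s) (Finset.univ \ S₀)).card := by
        apply Finset.card_le_card_of_injOn (fun τ => τ \ S₀)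
        · intro τ hτ
          rw [Finset.mem_coe, Finset.mem_filter] at hτ
          obtain ⟨-, hcard, hsub⟩ := hτ
          have hS₀τ : S₀ ⊆ τ := hS₀sub.trans hsub
          rw [Finset.mem_coe, Finset.mem_powersetCard]
          exact ⟨Finset.sdiff_subset_sdiff (Finset.subset_univ _) (Finset.Subset.refl _),
            by rw [Finset.card_sdiff_of_subset hS₀τ, hcard, hS₀card]⟩
        · intro τ₁ h₁ τ₂ h₂ hEq
          rw [Finset.mem_coe, Finset.mem_filter] at h₁ h₂
          have e₁ : τ₁ \ S₀ ∪ S₀ = τ₁ :=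
            Finset.sdiff_union_of_subset (hS₀sub.trans h₁.2.2)
          have e₂ : τ₂ \ S₀ ∪ S₀ = τ₂ :=
            Finset.sdiff_union_of_subset (hS₀sub.trans h₂.2.2)
          simp only at hEq
          rw [← e₁, ← e₂, hEq]
      calc _ ≤ (Finset.powersetCard (i - s) (Finset.univ \ S₀)).card := hinj
        _ = (q - s).choose (i - s) := by
            rw [Finset.card_powersetCard, Finset.card_sdiff_of_subset (Finset.subset_univ _),
              Finset.card_univ, Fintype.card_fin, hS₀card]
    · rw [if_neg hsi]
      have hempty : Finset.univ.filter (fun τ : Finset (Fin q) => τ.card = i ∧ S ⊆ τ) = ∅ := by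
        rw [Finset.filter_eq_empty_iff]
        rintro τ - ⟨hcard, hsub⟩
        have := Finset.card_le_card hsub
        omega
      rw [hempty, Finset.card_empty]
  omega

end AuxProofs

/-- **Pivot resolutions are at least as large as the smallest one.**
Suppose `scarf(I) < ∞`.  Every set `S` of at least two indices having a gap
satisfies `|S| ≥ scarf(I)`; consequently, for every pivot resolution `T_S` of
`Q/I` and every `i`, the rank of `(T_S)_i` is at least
`binom(q,i) − binom(q−scarf(I), i−scarf(I))`. -/
theorem pivot_resolution_rank_lower_bound {k : Type*} [Field k] {n q : ℕ}
    (D : Fin q → (Fin n →₀ ℕ))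
    (hne : ∀ i : Fin q, D i ≠ 0)
    (hmin : ∀ i j : Fin q, i ≠ j → ¬ lcmMono k n q D {i} ∣ lcmMono k n q D {j})
    (hfin : (scarfSet k n q D).Nonempty) :
    (∀ S : Finset (Fin q), 2 ≤ S.card →
      (∃ h : Fin q, h ∉ S ∧ lcmMono k n q D {h} ∣ lcmMono k n q D S) →
      sInf (scarfSet k n q D) ≤ S.card) ∧
    (∀ S : Finset (Fin q), 2 ≤ S.card → IsResolutionOf k n q D (pivotΩ S) →
      ∀ i : ℕ,
        q.choose i -
            (if sInf (scarfSet k n q D) ≤ i then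
              (q - sInf (scarfSet k n q D)).choose (i - sInf (scarfSet k n q D))
            else 0) ≤
          Module.finrank (MvPolynomial (Fin n) k) ↥(piece k n q (pivotΩ S) i)) := by
  classical
  have part1 : ∀ S : Finset (Fin q), 2 ≤ S.card →
      (∃ h : Fin q, h ∉ S ∧ lcmMono k n q D {h} ∣ lcmMono k n q D S) →
      sInf (scarfSet k n q D) ≤ S.card := by
    rintro S hS ⟨h, hnot, hdvd⟩
    rw [lcmMono, lcmMono, Finset.sup_singleton] at hdvd
    have hle : D h ≤ S.sup D :=
      ((MvPolynomial.monomial_dvd_monomial.1 hdvd).1).resolve_left one_ne_zero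
    apply Nat.sInf_le
    refine ⟨S, insert h S, ?_, rfl, ?_⟩
    · intro hEq
      have : h ∈ S := by rw [hEq]; exact Finset.mem_insert_self h S
      exact hnot this
    · rw [lcmMono, lcmMono]
      congr 1
      rw [Finset.sup_insert, sup_eq_right.2 hle]
  refine ⟨part1, ?_⟩
  intro S hS hres i
  obtain ⟨h, hnot, hle⟩ := resolution_gap k n q D S hS hres
  have hdvd : lcmMono k n q D {h} ∣ lcmMono k n q D S := by
    rw [lcmMono, lcmMono, Finset.sup_singleton]
    exact MvPolynomial.monomial_dvd_monomial.2 ⟨Or.inr hle, dvd_rfl⟩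
  have hs := part1 S hS ⟨h, hnot, hdvd⟩
  rw [finrank_piece]
  have hcount := count_bound q S (sInf (scarfSet k n q D)) i hs
  omega
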